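/- Let n ≥ 3, let T be a traceless symmetric endomorphism of ℝⁿ that is diagonal in the standard basis with diagonal entries λ_1,…,λ_n, set σ := tr(T²)/n and R := (2/(n−2))·(T∧id). Then for every pair i < j, the vector e_i∧e_j is an eigenvector of R² + R^# with eigenvalue λ_i·λ_j/(n−2) + (n·σ − λ_i² − λ_j²)/(n−2)². -/

import Mathlib

/-!
Common setup: we identify ⋀²ℝⁿ with the Lie algebra `so n` of real skew-symmetric
`n × n` matrices, sending `eᵢ ∧ eⱼ` to the rotation by `π/2` in the plane spanned by
`eᵢ, eⱼ`; the inner product on `so n` is `⟪A, B⟫ = -(1/2)·tr (A * B)`, and under this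
identification `v ∧ w` corresponds to the skew-symmetric matrix `v wᵀ - w vᵀ`, while
the wedge `A ∧ B` of two endomorphisms of `ℝⁿ` acts on a skew matrix `M` by
`M ↦ (1/2)(A M Bᵀ + B M Aᵀ)` (the unique linear extension of
`v∧w ↦ (1/2)(Av ∧ Bw + Bv ∧ Aw)`).
-/

noncomputable section

namespace BW

open Matrix

abbrev Mat (n : ℕ) := Matrix (Fin n) (Fin n) ℝ

/-- `so n`: the space of real skew-symmetric `n × n` matrices (≅ ⋀²ℝⁿ). -/
def so (n : ℕ) : Submodule ℝ (Mat n) where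
  carrier := {A | Aᵀ = -A}
  add_mem' := by
    intro A B hA hB
    simp only [Set.mem_setOf_eq] at *
    rw [Matrix.transpose_add, hA, hB, neg_add]
  zero_mem' := by simp
  smul_mem' := by
    intro c A hA
    simp only [Set.mem_setOf_eq] at *
    rw [Matrix.transpose_smul, hA, smul_neg]

variable {n : ℕ}

lemma mem_so_iff {A : Mat n} : A ∈ so n ↔ Aᵀ = -A := Iff.rfl

/-- The inner product `⟨A,B⟩ = -(1/2)·tr(AB)` on `so n`. -/
def ip (A B : so n) : ℝ := -(1/2) * Matrix.trace ((A : Mat n) * (B : Mat n))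

/-- `ip` as a linear map in the second variable. -/
def ipL (A : so n) : so n →ₗ[ℝ] ℝ where
  toFun B := ip A B
  map_add' B C := by
    simp only [ip, Submodule.coe_add, Matrix.mul_add, Matrix.trace_add]; ring
  map_smul' c B := by
    simp only [ip, SetLike.val_smul, Matrix.mul_smul, Matrix.trace_smul, smul_eq_mul,
      RingHom.id_apply]; ring

/-- The Lie bracket (matrix commutator) on `so n`. -/
def brk (A B : so n) : so n :=
  ⟨(A : Mat n) * (B : Mat n) - (B : Mat n) * (A : Mat n), by
    have hA : (A : Mat n)ᵀ = -(A : Mat n) := A.2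
    have hB : (B : Mat n)ᵀ = -(B : Mat n) := B.2
    rw [mem_so_iff, Matrix.transpose_sub, Matrix.transpose_mul, Matrix.transpose_mul, hA, hB]
    noncomm_ring⟩

/-- Auxiliary linear map underlying `A ∧ B`. -/
def wedgeAux (A B : Mat n) : Mat n →ₗ[ℝ] Mat n where
  toFun M := (1/2 : ℝ) • (A * M * Bᵀ + B * M * Aᵀ)
  map_add' M N := by
    simp only [mul_add, add_mul, smul_add]
    module
  map_smul' c M := by
    simp only [mul_smul_comm, smul_mul_assoc, RingHom.id_apply]
    module

lemma wedgeAux_mem (A B : Mat n) : ∀ M ∈ so n, wedgeAux A B M ∈ so n := by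
  intro M hM
  rw [mem_so_iff] at hM ⊢
  show ((1/2 : ℝ) • (A * M * Bᵀ + B * M * Aᵀ))ᵀ = -((1/2 : ℝ) • (A * M * Bᵀ + B * M * Aᵀ))
  rw [Matrix.transpose_smul, Matrix.transpose_add, Matrix.transpose_mul, Matrix.transpose_mul,
    Matrix.transpose_mul, Matrix.transpose_mul, Matrix.transpose_transpose,
    Matrix.transpose_transpose, hM]
  simp only [Matrix.neg_mul, Matrix.mul_neg, Matrix.mul_assoc, smul_neg, neg_add, smul_add]
  abel

/-- The wedge `A ∧ B` of two endomorphisms of ℝⁿ, as an endomorphism of `so n ≅ ⋀²ℝⁿ`: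
the unique linear map with `(A ∧ B)(v ∧ w) = (1/2)(Av ∧ Bw + Bv ∧ Aw)`. -/
def wedge (A B : Mat n) : Module.End ℝ (so n) :=
  (wedgeAux A B).restrict (p := so n) (q := so n) (wedgeAux_mem A B)

/-- The index set of pairs `i < j`. -/
def pairs (n : ℕ) : Finset (Fin n × Fin n) := Finset.univ.filter fun p => p.1 < p.2

/-- The standard basis vector `eᵢ` of ℝⁿ. -/
def evec (i : Fin n) : Fin n → ℝ := fun k => if k = i then 1 else 0

/-- `v ∧ w`, as an element of `so n ≅ ⋀²ℝⁿ`. -/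
def vwedge (v w : Fin n → ℝ) : so n :=
  ⟨Matrix.of fun i j => v i * w j - w i * v j, by
    rw [mem_so_iff]
    ext i j
    simp only [Matrix.transpose_apply, Matrix.of_apply, Matrix.neg_apply]
    ring⟩

/-- The orthonormal basis vector `eᵢ ∧ eⱼ` of `so n ≅ ⋀²ℝⁿ`. -/
def bvec (i j : Fin n) : so n := vwedge (evec i) (evec j)

/-- Hamilton's sharp product `R # S`: the self-adjoint endomorphism of `so n` determined by
`⟨(R#S)h, h⟩ = (1/2)·Σ_{α,β} ⟨[R(b_α), S(b_β)], h⟩·⟨[b_α, b_β], h⟩`,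
where `(b_α)` is the orthonormal basis `(eᵢ ∧ eⱼ)_{i<j}` of `so n`. -/
def sharp (R S : Module.End ℝ (so n)) : Module.End ℝ (so n) :=
  (1/4 : ℝ) • ∑ p ∈ pairs n, ∑ q ∈ pairs n,
    ((ipL (brk (R (bvec p.1 p.2)) (S (bvec q.1 q.2)))).smulRight
        (brk (bvec p.1 p.2) (bvec q.1 q.2))
      + (ipL (brk (bvec p.1 p.2) (bvec q.1 q.2))).smulRight
        (brk (R (bvec p.1 p.2)) (S (bvec q.1 q.2))))

/-- The right-hand side `R² + R^#` of Hamilton's ODE. -/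
def Qode (R : Module.End ℝ (so n)) : Module.End ℝ (so n) := R * R + sharp R R

/-- The coordinates `R_{ijkl} = ⟨R(eᵢ∧eⱼ), e_k∧e_l⟩` of an endomorphism of `so n`. -/
def Rcoord (R : Module.End ℝ (so n)) (i j k l : Fin n) : ℝ := ip (R (bvec i j)) (bvec k l)

/-- Self-adjointness with respect to the inner product `ip`. -/
def selfAdjEnd (R : Module.End ℝ (so n)) : Prop := ∀ X Y : so n, ip (R X) Y = ip X (R Y)

/-- A curvature operator: a self-adjoint endomorphism of `so n ≅ ⋀²ℝⁿ` satisfying the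
first Bianchi identity.  (`isCurvOp` carves out `S²_B(so n)`.) -/
def isCurvOp (R : Module.End ℝ (so n)) : Prop :=
  selfAdjEnd R ∧
    ∀ i j k l : Fin n, Rcoord R i j k l + Rcoord R j k i l + Rcoord R k i j l = 0

/-- The Ricci tensor `Ric_{ij} = Σ_k R_{ikjk}` of `R`. -/
def RicM (R : Module.End ℝ (so n)) : Mat n := Matrix.of fun i j => ∑ k, Rcoord R i k j k

/-- `λ̄ = tr(Ric)/n`. -/
def lamb (R : Module.End ℝ (so n)) : ℝ := Matrix.trace (RicM R) / (n : ℝ)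

/-- The traceless Ricci tensor `Ric₀ = Ric - (tr Ric / n)·id`. -/
def Ric0 (R : Module.End ℝ (so n)) : Mat n := RicM R - lamb R • (1 : Mat n)

/-- `σ = tr(Ric₀²)/n`. -/
def sigmaR (R : Module.End ℝ (so n)) : ℝ := Matrix.trace (Ric0 R * Ric0 R) / (n : ℝ)

/-- `R_I = (λ̄/(n-1))·(id ∧ id)`, the projection of `R` onto `⟨I⟩`. -/
def RI (R : Module.End ℝ (so n)) : Module.End ℝ (so n) :=
  (lamb R / ((n : ℝ) - 1)) • wedge (1 : Mat n) (1 : Mat n)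

/-- `R_{Ric₀} = (2/(n-2))·(Ric₀ ∧ id)`, the projection of `R` onto `⟨Ric₀⟩`. -/
def RRic0 (R : Module.End ℝ (so n)) : Module.End ℝ (so n) :=
  (2 / ((n : ℝ) - 2)) • wedge (Ric0 R) (1 : Mat n)

/-- The linear map `ℓ_{a,b}(R) = R + 2(n-1)a·R_I + (n-2)b·R_{Ric₀}`. -/
def lab (a b : ℝ) (R : Module.End ℝ (so n)) : Module.End ℝ (so n) :=
  R + (2 * ((n : ℝ) - 1) * a) • RI R + (((n : ℝ) - 2) * b) • RRic0 R

/-- Positive semidefiniteness of the quadratic form of an endomorphism of `so n`. -/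
def posSemidefEnd (R : Module.End ℝ (so n)) : Prop := ∀ X : so n, 0 ≤ ip (R X) X

/-- Positive definiteness of the quadratic form of an endomorphism of `so n`. -/
def posDefEnd (R : Module.End ℝ (so n)) : Prop := ∀ X : so n, X ≠ 0 → 0 < ip (R X) X

/-- `R` is 2-nonnegative: the sum of its two smallest eigenvalues is nonnegative;
equivalently (Ky Fan), `q_R(X) + q_R(Y) ≥ 0` for all orthonormal pairs `X, Y`. -/
def twoNonneg (R : Module.End ℝ (so n)) : Prop :=
  ∀ X Y : so n, ip X X = 1 → ip Y Y = 1 → ip X Y = 0 → 0 ≤ ip (R X) X + ip (R Y) Y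

/-- The (Frobenius) norm of an endomorphism of `so n`, computed in the orthonormal
basis `(eᵢ ∧ eⱼ)_{i<j}`. -/
def endNorm (R : Module.End ℝ (so n)) : ℝ :=
  Real.sqrt (∑ p ∈ pairs n, ip (R (bvec p.1 p.2)) (R (bvec p.1 p.2)))

/-- The tangent cone `T_R C`: the closure of `{t·(S - R) : S ∈ C, t ≥ 0}`. -/
def tangCone (C : Set (Module.End ℝ (so n))) (R : Module.End ℝ (so n)) :
    Set (Module.End ℝ (so n)) :=
  {X | ∀ ε > 0, ∃ S ∈ C, ∃ t : ℝ, 0 ≤ t ∧ endNorm (X - t • (S - R)) < ε}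

/-- `C` is a closed subset of the space of endomorphisms of `so n`. -/
def isClosedSet (C : Set (Module.End ℝ (so n))) : Prop :=
  ∀ X, (∀ ε > 0, ∃ Y ∈ C, endNorm (X - Y) < ε) → X ∈ C

/-- The interior of `C` relative to the subspace `S²_B(so n)` of curvature operators. -/
def interiorCurv (C : Set (Module.End ℝ (so n))) : Set (Module.End ℝ (so n)) :=
  {X | isCurvOp X ∧ ∃ ε > 0, ∀ Y, isCurvOp Y → endNorm (Y - X) < ε → Y ∈ C}

/-- Auxiliary linear map `M ↦ g M gᵀ` on matrices. -/
def conjAux (g : Mat n) : Mat n →ₗ[ℝ] Mat n where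
  toFun M := g * M * gᵀ
  map_add' M N := by simp only [mul_add, add_mul]
  map_smul' c M := by simp only [mul_smul_comm, smul_mul_assoc, RingHom.id_apply]

/-- `⋀²g` : the action `M ↦ g M gᵀ` of `g` on `so n ≅ ⋀²ℝⁿ` (for `g` orthogonal this is
the second exterior power of `g`). -/
def conjSo (g : Mat n) : Module.End ℝ (so n) :=
  (conjAux g).restrict (p := so n) (q := so n) (fun M hM => by
    rw [mem_so_iff] at hM ⊢
    show (g * M * gᵀ)ᵀ = -(g * M * gᵀ)
    rw [Matrix.transpose_mul, Matrix.transpose_mul, Matrix.transpose_transpose, hM]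
    simp only [Matrix.neg_mul, Matrix.mul_neg, Matrix.mul_assoc])

/-- The action `g · R = (⋀²g) ∘ R ∘ (⋀²g)⁻¹` of an orthogonal matrix `g`
(whose inverse is `gᵀ`) on endomorphisms of `so n`. -/
def onAct (g : Mat n) (R : Module.End ℝ (so n)) : Module.End ℝ (so n) :=
  conjSo g * R * conjSo gᵀ

/-- Two sets are at Hausdorff distance at most `ε` from each other. -/
def hdClose (A B : Set (Module.End ℝ (so n))) (ε : ℝ) : Prop :=
  (∀ X ∈ A, ∃ Y ∈ B, endNorm (X - Y) ≤ ε) ∧ ∀ Y ∈ B, ∃ X ∈ A, endNorm (X - Y) ≤ ε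

/-- The truncation `C ∩ {‖R‖ ≤ 1}`. -/
def truncSet (C : Set (Module.End ℝ (so n))) : Set (Module.End ℝ (so n)) :=
  {R ∈ C | endNorm R ≤ 1}

/-!
In the orthonormal basis `eₐ ∧ e_b` the operator `R = (2/(n-2))·(T ∧ id)` is diagonal, with
eigenvalues `ν_ab = (λ_a + λ_b)/(n-2)`. For any diagonal `R`, the ad-invariance
`⟨[X, Y], Z⟩ = ⟨Y, [Z, X]⟩` and the expansion of `[h, b_α]` in the basis collapse the double sum
defining `R^#` to `(1/2)·Σ_α ν_α [b_α, R[h, b_α]]`; for `h = eᵢ ∧ eⱼ` only the terms with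
`b_α = ±eᵢ ∧ e_k, ±eⱼ ∧ e_k` survive, giving `R^#(eᵢ ∧ eⱼ) = Σ_{k ≠ i,j} ν_ik ν_jk · eᵢ ∧ eⱼ`.
Adding `ν_ij²` and using `Σ λ_k = 0` gives the stated eigenvalue.
-/

lemma coe_brk (X Y : so n) : (brk X Y : Mat n) = X * Y - Y * X := rfl

def brkBilin : so n →ₗ[ℝ] so n →ₗ[ℝ] so n :=
  LinearMap.mk₂ ℝ brk
    (fun X X' Y => Subtype.ext <| by simp only [coe_brk, Submodule.coe_add]; noncomm_ring)
    (fun c X Y => Subtype.ext <| by simp only [coe_brk, SetLike.val_smul]; simp [smul_sub])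
    (fun X Y Y' => Subtype.ext <| by simp only [coe_brk, Submodule.coe_add]; noncomm_ring)
    (fun c X Y => Subtype.ext <| by simp only [coe_brk, SetLike.val_smul]; simp [smul_sub])

lemma brk_comm (X Y : so n) : brk X Y = -brk Y X :=
  Subtype.ext <| by simp only [coe_brk, NegMemClass.coe_neg, neg_sub]

lemma brk_smul_left (c : ℝ) (X Y : so n) : brk (c • X) Y = c • brk X Y :=
  LinearMap.map_smul₂ brkBilin c X Y

lemma brk_smul_right (c : ℝ) (X Y : so n) : brk X (c • Y) = c • brk X Y :=
  map_smul (brkBilin X) c Y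

lemma brk_add_right (X Y Z : so n) : brk X (Y + Z) = brk X Y + brk X Z := map_add (brkBilin X) Y Z

lemma brk_sub_right (X Y Z : so n) : brk X (Y - Z) = brk X Y - brk X Z := map_sub (brkBilin X) Y Z

lemma brk_neg_left (X Y : so n) : brk (-X) Y = -brk X Y := LinearMap.map_neg₂ brkBilin X Y

lemma brk_neg_right (X Y : so n) : brk X (-Y) = -brk X Y := map_neg (brkBilin X) Y

lemma brk_zero_right (X : so n) : brk X 0 = 0 := map_zero (brkBilin X)

lemma brk_sum_right {ι : Type*} (s : Finset ι) (X : so n) (Y : ι → so n) :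
    brk X (∑ i ∈ s, Y i) = ∑ i ∈ s, brk X (Y i) := map_sum (brkBilin X) Y s

lemma ip_smul_left (c : ℝ) (X Y : so n) : ip (c • X) Y = c * ip X Y := by
  simp only [ip, SetLike.val_smul, Matrix.smul_mul, Matrix.trace_smul, smul_eq_mul]; ring

lemma ip_brk (X Y Z : so n) : ip (brk X Y) Z = ip Y (brk Z X) := by
  simp only [ip, coe_brk, Matrix.sub_mul, Matrix.mul_sub, Matrix.trace_sub, Matrix.mul_assoc]
  rw [Matrix.trace_mul_comm (X : Mat n), Matrix.mul_assoc]

lemma coe_bvec (a b : Fin n) : (bvec a b : Mat n) = single a b 1 - single b a 1 := by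
  ext x y
  simp only [bvec, vwedge, evec, Matrix.of_apply, Matrix.sub_apply, Matrix.single_apply]
  grind

lemma bvec_self (a : Fin n) : bvec a a = 0 :=
  Subtype.ext <| by simp [coe_bvec]

lemma bvec_swap (a b : Fin n) : bvec b a = -bvec a b :=
  Subtype.ext <| by simp [coe_bvec]

lemma coe_so_apply_swap (W : so n) (a b : Fin n) : (W : Mat n) b a = -(W : Mat n) a b := by
  rw [← Matrix.transpose_apply (W : Mat n), W.2, Matrix.neg_apply]

lemma ip_bvec_left (a b : Fin n) (W : so n) : ip (bvec a b) W = (W : Mat n) a b := by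
  simp only [ip, coe_bvec, Matrix.sub_mul, Matrix.trace_sub, Matrix.trace_single_mul,
    coe_so_apply_swap W a b, one_smul]
  ring

lemma single_one_mul_single_one (a b c d : Fin n) :
    (single a b 1 * single c d 1 : Mat n) = if b = c then single a d 1 else 0 := by
  split_ifs with h
  · rw [h, Matrix.single_mul_single_same, one_mul]
  · simp [h]

lemma brk_bvec (a b c d : Fin n) :
    brk (bvec a b) (bvec c d) =
      (if b = c then bvec a d else 0) + (if a = d then bvec b c else 0)
        - (if b = d then bvec a c else 0) - (if a = c then bvec b d else 0) := by
  apply Subtype.ext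
  simp only [coe_brk, coe_bvec, AddSubgroupClass.coe_sub, Submodule.coe_add, apply_ite Subtype.val,
    ZeroMemClass.coe_zero, Matrix.sub_mul, Matrix.mul_sub, single_one_mul_single_one]
  split_ifs <;> subst_vars <;> (try contradiction) <;> abel

lemma sum_eq_two_nsmul_sum_pairs {M : Type*} [AddCommMonoid M] (f : Fin n × Fin n → M)
    (hswap : ∀ a b, f (b, a) = f (a, b)) (hdiag : ∀ a, f (a, a) = 0) :
    ∑ p, f p = 2 • ∑ p ∈ pairs n, f p := by
  have hsplit : ∀ p : Fin n × Fin n,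
      f p = (if p.1 < p.2 then f p else 0) + (if p.2 < p.1 then f p else 0) := by
    rintro ⟨a, b⟩
    rcases lt_trichotomy a b with h | rfl | h
    · simp [h, h.not_gt]
    · simp [hdiag]
    · simp [h, h.not_gt]
  calc ∑ p, f p
      = ∑ p : Fin n × Fin n, (if p.1 < p.2 then f p else 0)
          + ∑ p : Fin n × Fin n, (if p.2 < p.1 then f p else 0) := by
        rw [← Finset.sum_add_distrib]; exact Finset.sum_congr rfl fun p _ => hsplit p
    _ = ∑ p : Fin n × Fin n, (if p.1 < p.2 then f p else 0)
          + ∑ p : Fin n × Fin n, (if p.1 < p.2 then f p else 0) := by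
        rw [← (Equiv.prodComm (Fin n) (Fin n)).sum_comp]
        congr 1
        exact Finset.sum_congr rfl fun ⟨a, b⟩ _ => by simp [hswap a b]
    _ = 2 • ∑ p ∈ pairs n, f p := by rw [two_nsmul, pairs, Finset.sum_filter]

lemma sum_pairs_ip_bvec_smul (W : so n) :
    ∑ p ∈ pairs n, ip (bvec p.1 p.2) W • bvec p.1 p.2 = W := by
  have hfull : ∑ p : Fin n × Fin n, ip (bvec p.1 p.2) W • bvec p.1 p.2 = (2 : ℝ) • W := by
    apply Subtype.ext
    have hWt : ∑ b, ∑ a, single b a ((W : Mat n) a b) = (W : Mat n)ᵀ :=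
      ((W : Mat n)ᵀ.matrix_eq_sum_single).symm
    simp only [ip_bvec_left, Submodule.coe_sum, SetLike.val_smul, coe_bvec, smul_sub,
      Matrix.smul_single, smul_eq_mul, mul_one, Finset.sum_sub_distrib, Fintype.sum_prod_type]
    rw [Finset.sum_comm (f := fun a b => single b a ((W : Mat n) a b)), hWt, W.2,
      ← Matrix.matrix_eq_sum_single, sub_neg_eq_add, two_smul]
  have hswap (a b : Fin n) :
      ip (bvec b a) W • bvec b a = ip (bvec a b) W • bvec a b := by
    rw [ip_bvec_left, ip_bvec_left, bvec_swap a b, coe_so_apply_swap W a b, neg_smul_neg]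
  have hpairs := (sum_eq_two_nsmul_sum_pairs _ hswap fun a => by simp [bvec_self]).symm.trans hfull
  rw [two_nsmul, ← two_smul ℝ] at hpairs
  exact smul_right_injective _ two_ne_zero hpairs

lemma ipL_apply (X Y : so n) : ipL X Y = ip X Y := rfl

lemma sharp_apply_of_eigen (R : Module.End ℝ (so n)) {ν : Fin n → Fin n → ℝ}
    (hR : ∀ a b, R (bvec a b) = ν a b • bvec a b) (h : so n) :
    sharp R R h = (1 / 2 : ℝ) •
      ∑ p ∈ pairs n, ν p.1 p.2 • brk (bvec p.1 p.2) (R (brk h (bvec p.1 p.2))) := by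
  have hexp : ∀ W, R W = ∑ q ∈ pairs n, (ip (bvec q.1 q.2) W * ν q.1 q.2) • bvec q.1 q.2 := by
    intro W
    conv_lhs => rw [← sum_pairs_ip_bvec_smul W]
    simp only [map_sum, map_smul, hR, smul_smul]
  simp only [sharp, LinearMap.smul_apply, LinearMap.sum_apply, LinearMap.add_apply,
    LinearMap.smulRight_apply, ipL_apply, hR, brk_smul_left, brk_smul_right, ip_smul_left, ip_brk,
    hexp (brk h _), brk_sum_right, Finset.smul_sum, smul_smul]
  exact Finset.sum_congr rfl fun p _ => Finset.sum_congr rfl fun q _ => by module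

section

variable {i j : Fin n}

lemma brk_bvec_bvec_of_ne (hij : i ≠ j) (k : Fin n) :
    brk (bvec j k) (bvec i k) = if k ∈ ({i, j} : Finset (Fin n))ᶜ then bvec i j else 0 := by
  rw [brk_bvec, bvec_swap j i]
  by_cases hki : k = i
  · subst hki; simp [hij.symm]
  by_cases hkj : k = j
  · subst hkj; simp [hki]
  simp [hij.symm, hki, hkj, Ne.symm hkj]

lemma sum_brk_bvec_apply_brk_of_eigen (R : Module.End ℝ (so n)) {ν : Fin n → Fin n → ℝ}
    (hR : ∀ a b, R (bvec a b) = ν a b • bvec a b) (hν : ∀ a b, ν a b = ν b a) :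
    ∑ p : Fin n × Fin n, ν p.1 p.2 • brk (bvec p.1 p.2) (R (brk (bvec i j) (bvec p.1 p.2))) =
      (4 : ℝ) • ∑ k, (ν i k * ν j k) • brk (bvec j k) (bvec i k) := by
  simp only [Fintype.sum_prod_type, brk_bvec i j, map_add, map_sub, apply_ite R, map_zero, hR,
    brk_add_right, brk_sub_right, apply_ite (brk _), brk_zero_right, brk_smul_right, smul_add,
    smul_sub, smul_ite, smul_zero, Finset.sum_add_distrib, Finset.sum_sub_distrib,
    Finset.sum_ite_eq, Finset.sum_ite_irrel, Finset.sum_const_zero, Finset.mem_univ, if_true]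
  have hterm₂ (k : Fin n) : brk (bvec k i) (bvec j k) = brk (bvec j k) (bvec i k) := by
    rw [bvec_swap i k, brk_neg_left, brk_comm, neg_neg]
  have hterm₃ (k : Fin n) : brk (bvec k j) (bvec i k) = -brk (bvec j k) (bvec i k) := by
    rw [bvec_swap j k, brk_neg_left]
  have hterm₄ (k : Fin n) : brk (bvec i k) (bvec j k) = -brk (bvec j k) (bvec i k) := brk_comm _ _
  simp only [hterm₂, hterm₃, hterm₄, smul_neg, Finset.sum_neg_distrib, sub_neg_eq_add, hν _ i,
    hν _ j, smul_smul, mul_comm (ν j _)]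
  module

lemma sharp_apply_bvec_of_eigen (R : Module.End ℝ (so n)) {ν : Fin n → Fin n → ℝ}
    (hR : ∀ a b, R (bvec a b) = ν a b • bvec a b) (hν : ∀ a b, ν a b = ν b a) (hij : i ≠ j) :
    sharp R R (bvec i j) = (∑ k ∈ ({i, j} : Finset (Fin n))ᶜ, ν i k * ν j k) • bvec i j := by
  have hpairs := sum_eq_two_nsmul_sum_pairs
    (fun p => ν p.1 p.2 • brk (bvec p.1 p.2) (R (brk (bvec i j) (bvec p.1 p.2))))
    (fun a b => by
      dsimp only
      rw [bvec_swap a b, hν b a, brk_neg_right, map_neg, brk_neg_left, brk_neg_right, neg_neg])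
    (fun a => by simp only [bvec_self, brk_zero_right, map_zero, smul_zero])
  rw [sum_brk_bvec_apply_brk_of_eigen R hR hν, two_nsmul, ← two_smul ℝ] at hpairs
  have hsum : ∑ k, (ν i k * ν j k) • brk (bvec j k) (bvec i k)
      = (∑ k ∈ ({i, j} : Finset (Fin n))ᶜ, ν i k * ν j k) • bvec i j := by
    simp only [brk_bvec_bvec_of_ne hij, smul_ite, smul_zero, Finset.sum_ite_mem,
      Finset.univ_inter, Finset.sum_smul]
  rw [sharp_apply_of_eigen R hR, ← hsum]
  linear_combination (norm := module) (-1 / 4 : ℝ) • hpairs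

lemma wedge_diagonal_apply_bvec (d e : Fin n → ℝ) (a b : Fin n) :
    wedge (diagonal d) (diagonal e) (bvec a b) = ((d a * e b + e a * d b) / 2) • bvec a b := by
  apply Subtype.ext
  ext x y
  simp only [wedge, LinearMap.restrict_apply, wedgeAux, LinearMap.coe_mk, AddHom.coe_mk,
    diagonal_transpose, SetLike.val_smul, Matrix.smul_apply, Matrix.add_apply,
    Matrix.diagonal_mul, Matrix.mul_diagonal, coe_bvec, Matrix.sub_apply, Matrix.single_apply,
    smul_eq_mul]
  split_ifs <;> grind

lemma sum_compl_pair_add_mul_add {α : Type*} [CommRing α] {x : Fin n → α} (hx : ∑ k, x k = 0)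
    (hij : i ≠ j) :
    (x i + x j) ^ 2 + ∑ k ∈ ({i, j} : Finset (Fin n))ᶜ, (x i + x k) * (x j + x k)
      = (n - 2) * (x i * x j) + (∑ k, x k ^ 2 - x i ^ 2 - x j ^ 2) := by
  have hfull : ∑ k, (x i + x k) * (x j + x k) = n * (x i * x j) + ∑ k, x k ^ 2 := by
    simp only [mul_add, add_mul, Finset.sum_add_distrib, ← Finset.mul_sum, ← Finset.sum_mul, hx,
      Finset.sum_const, Finset.card_univ, Fintype.card_fin, nsmul_eq_mul, sq]
    ring
  rw [← Finset.sum_compl_add_sum {i, j} (fun k => (x i + x k) * (x j + x k)),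
    Finset.sum_pair hij] at hfull
  linear_combination hfull

end

theorem stmt_5_general {n : ℕ} (hn : 3 ≤ n) (T : Mat n)
    (hdiag : ∀ i j : Fin n, i ≠ j → T i j = 0) (htr : Matrix.trace T = 0) :
    ∀ i j : Fin n, i < j →
      Qode ((2 / ((n : ℝ) - 2)) • wedge T (1 : Mat n)) (bvec i j) =
        (T i i * T j j / ((n : ℝ) - 2)
          + ((n : ℝ) * (Matrix.trace (T * T) / (n : ℝ)) - T i i ^ 2 - T j j ^ 2)
              / ((n : ℝ) - 2) ^ 2) • bvec i j := by
  intro i j hij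
  obtain ⟨d, rfl⟩ : ∃ d, T = diagonal d := ⟨_, (IsDiag.diagonal_diag fun a b => hdiag a b).symm⟩
  have hn2 : (n : ℝ) - 2 ≠ 0 := by
    have : (3 : ℝ) ≤ n := by exact_mod_cast hn
    linarith
  set ν : Fin n → Fin n → ℝ := fun a b => (d a + d b) / ((n : ℝ) - 2) with hν
  have hR (a b : Fin n) :
      ((2 / ((n : ℝ) - 2)) • wedge (diagonal d) 1) (bvec a b) = ν a b • bvec a b := by
    rw [LinearMap.smul_apply, ← diagonal_one, wedge_diagonal_apply_bvec, smul_smul, hν]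
    congr 1
    ring
  rw [Qode, LinearMap.add_apply, Module.End.mul_apply, hR, map_smul, hR, smul_smul,
    sharp_apply_bvec_of_eigen _ hR (fun a b => by simp only [hν, add_comm]) hij.ne, ← add_smul]
  rw [trace_diagonal] at htr
  have key := sum_compl_pair_add_mul_add htr hij.ne
  simp only [hν, div_mul_div_comm, ← Finset.sum_div, diagonal_apply_eq, diagonal_mul_diagonal,
    trace_diagonal]
  congr 1
  field_simp
  linear_combination key

/-- Eigenvalue computation for `R² + R^#` where `R = (2/(n−2))·(T ∧ id)` with `T`
traceless symmetric and diagonal. -/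
theorem stmt_5 {n : ℕ} (hn : 3 ≤ n) (T : Mat n) (hsym : Tᵀ = T)
    (hdiag : ∀ i j : Fin n, i ≠ j → T i j = 0) (htr : Matrix.trace T = 0) :
    ∀ i j : Fin n, i < j →
      Qode ((2 / ((n : ℝ) - 2)) • wedge T (1 : Mat n)) (bvec i j) =
        (T i i * T j j / ((n : ℝ) - 2)
          + ((n : ℝ) * (Matrix.trace (T * T) / (n : ℝ)) - T i i ^ 2 - T j j ^ 2)
              / ((n : ℝ) - 2) ^ 2) • bvec i j :=
  stmt_5_general hn T hdiag htr

end BW
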